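/- arXiv:2105.13115 — 6 statements merged into one kernel-verified Lean document; each statement's English description precedes it below -/
import Mathlib

section
/- Let f : ℂˣ → ℂˣ be a group homomorphism for which there exist a natural number N and a polynomial P ∈ ℂ[X, Y] in two variables such that f(z) = P(z, conj z) · (z · conj z)^(−N) for all z ∈ ℂˣ. Then f is a monomial character: there exist integers p and q such that f(z) = z^p · (conj z)^q for all z ∈ ℂˣ. -/
/-!
Clearing the factor `(z * conj z) ^ (-N)` termwise writes `f` as a finite linear combination of
the monomial characters `z ↦ z ^ p * (conj z) ^ q`. By Dedekind's lemma distinct characters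
`ℂˣ →* ℂ` are linearly independent, so a character lying in the span of finitely many characters
is one of them.
-/

open Complex

theorem MonoidHom.exists_eq_of_coe_eq_sum_smul {G L ι : Type*} [MulOneClass G] [CommRing L]
    [IsDomain L] {χ : G →* L} {s : Finset ι} {φ : ι → G →* L} {c : ι → L}
    (h : ⇑χ = ∑ i ∈ s, c i • ⇑(φ i)) : ∃ i ∈ s, φ i = χ := by
  by_contra hχ
  have hχ' : χ ∉ φ '' s := by simpa using hχ
  refine (linearIndependent_monoidHom G L).notMem_span_image hχ' ?_
  rw [h]
  refine Submodule.sum_mem _ fun i hi => Submodule.smul_mem _ _ (Submodule.subset_span ?_)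
  exact ⟨φ i, ⟨i, hi, rfl⟩, rfl⟩

theorem MvPolynomial.eval_pair_mul_zpow_eq_sum {K : Type*} [Field K] {z w : K} (hz : z ≠ 0)
    (hw : w ≠ 0) (P : MvPolynomial (Fin 2) K) (N : ℕ) :
    MvPolynomial.eval ![z, w] P * (z * w) ^ (-(N : ℤ)) =
      ∑ m ∈ P.support, P.coeff m * (z ^ ((m 0 : ℤ) - N) * w ^ ((m 1 : ℤ) - N)) := by
  rw [MvPolynomial.eval_eq', Finset.sum_mul]
  refine Finset.sum_congr rfl fun m _ => ?_
  simp only [Fin.prod_univ_two, Matrix.cons_val_zero, Matrix.cons_val_one, zpow_sub₀ hz,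
    zpow_sub₀ hw, zpow_neg, zpow_natCast, mul_pow]
  field_simp

noncomputable def monomialChar (p q : ℤ) : ℂˣ →* ℂ where
  toFun z := (z : ℂ) ^ p * (starRingEnd ℂ (z : ℂ)) ^ q
  map_one' := by simp
  map_mul' a b := by
    simp only [Units.val_mul, map_mul, mul_zpow]
    ring

theorem polynomial_character_is_monomial (f : ℂˣ →* ℂˣ)
    (halg : ∃ (N : ℕ) (P : MvPolynomial (Fin 2) ℂ),
      ∀ z : ℂˣ, ((f z : ℂˣ) : ℂ) =
        MvPolynomial.eval ![(z : ℂ), (starRingEnd ℂ) (z : ℂ)] P *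
          ((z : ℂ) * (starRingEnd ℂ) (z : ℂ)) ^ (-(N : ℤ))) :
    ∃ p q : ℤ, ∀ z : ℂˣ,
      ((f z : ℂˣ) : ℂ) = (z : ℂ) ^ p * ((starRingEnd ℂ) (z : ℂ)) ^ q := by
  obtain ⟨N, P, hP⟩ := halg
  have hsum : ⇑((Units.coeHom ℂ).comp f) =
      ∑ m ∈ P.support, P.coeff m • ⇑(monomialChar ((m 0 : ℤ) - N) ((m 1 : ℤ) - N)) := by
    funext z
    have hz : (z : ℂ) ≠ 0 := z.ne_zero
    rw [MonoidHom.comp_apply, Units.coeHom_apply, hP z,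
      MvPolynomial.eval_pair_mul_zpow_eq_sum hz ((map_ne_zero _).mpr hz)]
    simp [monomialChar]
  obtain ⟨m, -, hm⟩ := MonoidHom.exists_eq_of_coe_eq_sum_smul hsum
  exact ⟨_, _, fun z => (DFunLike.congr_fun hm z).symm⟩
end

section
/- Let V be a finite-dimensional complex vector space, σ an antilinear involution on V, n a natural number, and F^0 ⊇ F^1 ⊇ ⋯ ⊇ F^n ⊇ F^{n+1} a descending chain of complex subspaces with F^0 = V and F^{n+1} = {0}, such that for every p with 0 ≤ p ≤ n + 1 one has F^p ∩ σ(F^{n+1−p}) = {0} and F^p + σ(F^{n+1−p}) = V. Define H^p = F^p ∩ σ(F^{n−p}) for 0 ≤ p ≤ n. Then V is the internal direct sum of H^0, …, H^n, σ(H^p) = H^{n−p} for all p, and F^p = H^n + H^{n−1} + ⋯ + H^p for all 0 ≤ p ≤ n. In other words, a Hodge filtration opposed to its conjugate determines a Hodge decomposition, so the filtration and decomposition definitions of a pure weight-n Hodge structure are equivalent. -/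
/-!
Put `G^m = σ(F^m)`. Opposedness says `V = F^{p+1} ⊕ G^{n-p}` for every `p ≤ n`. Splitting
`v ∈ F^p` along this sum, the `G^{n-p}`-component also lies in `F^p`, hence in
`H^p = F^p ∩ G^{n-p}`, and the other component lies in `F^{p+1}`; downward induction on `p`
writes `v` as a sum of elements of `H^p, …, H^n`. Uniqueness is upward induction: if
`∑ c_r = 0` with `c_r ∈ H^r` and `c_r = 0` for `r < k`, then `c_k = -∑_{r > k} c_r` lies in
`F^{k+1} ∩ G^{n-k} = 0`. Only the additive structure enters, so this is done for filtrations by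
additive subgroups. Finally `σ(H^p) = σ(F^p) ∩ F^{n-p} = H^{n-p}` as `σ` is an involution.
-/

/-- The Hodge summand `H^p = F^p ∩ σ(F^{n-p})` associated to a filtration `F` and a
real structure `σ`. -/
def hodgeSummand {V : Type*} [AddCommGroup V] [Module ℂ V] {n : ℕ}
    (σ : V → V) (F : ℕ → Submodule ℂ V) (p : Fin (n + 1)) : Set V :=
  (F (p : ℕ) : Set V) ∩ σ '' (F (n - (p : ℕ)) : Set V)

namespace OpposedFiltrations

variable {V : Type*} [AddCommGroup V] {n : ℕ} {F G : ℕ → AddSubgroup V}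

theorem sum_mem_of_eq_zero_of_lt (hF : Antitone F) {p : ℕ} {c : Fin (n + 1) → V}
    (hc : ∀ r : Fin (n + 1), c r ∈ F r)
    (hzero : ∀ r : Fin (n + 1), (r : ℕ) < p → c r = 0) :
    ∑ r, c r ∈ F p :=
  sum_mem fun r _ => (lt_or_ge (r : ℕ) p).elim
    (fun h => hzero r h ▸ zero_mem _) (fun h => hF h (hc r))

theorem exists_decomposition_of_mem (hF : Antitone F) (hFend : F (n + 1) = ⊥)
    (hcodisj : ∀ p ≤ n, Codisjoint (F (p + 1)) (G (n - p)))
    {p : ℕ} (hp : p ≤ n + 1) {v : V} (hv : v ∈ F p) :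
    ∃ c : Fin (n + 1) → V, (∀ r : Fin (n + 1), c r ∈ F r ⊓ G (n - r)) ∧
      (∀ r : Fin (n + 1), (r : ℕ) < p → c r = 0) ∧ v = ∑ r, c r := by
  classical
  induction hp using Nat.decreasingInduction generalizing v with
  | self =>
    rw [hFend, AddSubgroup.mem_bot] at hv
    exact ⟨0, fun _ => zero_mem _, fun _ _ => rfl, by simp [hv]⟩
  | of_succ p hp ih =>
    obtain ⟨x, hx, g, hg, rfl⟩ :=
      AddSubgroup.mem_sup.1 ((hcodisj p (by omega)).eq_top ▸ AddSubgroup.mem_top v)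
    have hgF : g ∈ F p := by simpa using sub_mem hv (hF p.le_succ hx)
    obtain ⟨c, hcH, hczero, rfl⟩ := ih hx
    let i : Fin (n + 1) := ⟨p, by omega⟩
    refine ⟨c + Pi.single i g, fun r => ?_, fun r hr => ?_, ?_⟩
    · by_cases hr : r = i
      · subst hr
        simpa [hczero i p.lt_succ_self] using AddSubgroup.mem_inf.2 ⟨hgF, hg⟩
      · simpa [hr] using hcH r
    · have hri : r ≠ i := fun h => by simp [h, i] at hr
      simp [hri, hczero r (by omega)]
    · simp [Finset.sum_add_distrib]

theorem eq_zero_of_sum_eq_zero (hF : Antitone F)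
    (hdisj : ∀ p ≤ n, Disjoint (F (p + 1)) (G (n - p)))
    {c : Fin (n + 1) → V} (hc : ∀ r : Fin (n + 1), c r ∈ F r ⊓ G (n - r))
    (hsum : ∑ r, c r = 0) : c = 0 := by
  classical
  suffices h : ∀ k, ∀ r : Fin (n + 1), (r : ℕ) < k → c r = 0 from
    funext fun r => h _ r r.isLt
  intro k
  induction k with
  | zero => intro r hr; omega
  | succ k ih =>
    intro i hi
    rcases Nat.lt_or_ge i k with hik | hik
    · exact ih i hik
    have hik : (i : ℕ) = k := by omega
    have hrest : ∑ r, Function.update c i 0 r ∈ F (k + 1) := by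
      refine sum_mem_of_eq_zero_of_lt hF (fun r => ?_) (fun r hr => ?_)
      · by_cases hri : r = i
        · simp [hri]
        · simpa [hri] using (AddSubgroup.mem_inf.1 (hc r)).1
      · by_cases hri : r = i
        · simp [hri]
        · simpa [hri] using ih r (by omega)
    rw [Finset.sum_update_of_mem (Finset.mem_univ i), zero_add] at hrest
    rw [Finset.sum_eq_add_sum_sdiff_singleton_of_mem (Finset.mem_univ i)] at hsum
    have hciF : c i ∈ F (k + 1) := by
      simpa [eq_neg_of_add_eq_zero_right hsum] using hrest
    have hciG : c i ∈ G (n - k) := hik ▸ (AddSubgroup.mem_inf.1 (hc i)).2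
    exact AddSubgroup.disjoint_def.1 (hdisj k (by omega)) hciF hciG

theorem eq_of_sum_eq (hF : Antitone F) (hdisj : ∀ p ≤ n, Disjoint (F (p + 1)) (G (n - p)))
    {c c' : Fin (n + 1) → V} (hc : ∀ r : Fin (n + 1), c r ∈ F r ⊓ G (n - r))
    (hc' : ∀ r : Fin (n + 1), c' r ∈ F r ⊓ G (n - r)) (hsum : ∑ r, c r = ∑ r, c' r) :
    c = c' :=
  sub_eq_zero.1 <| eq_zero_of_sum_eq_zero hF hdisj (fun r => sub_mem (hc r) (hc' r))
    (by simp [Finset.sum_sub_distrib, hsum])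

theorem mem_iff_exists_decomposition (hF : Antitone F) (hFend : F (n + 1) = ⊥)
    (hcodisj : ∀ p ≤ n, Codisjoint (F (p + 1)) (G (n - p)))
    {p : ℕ} (hp : p ≤ n + 1) {v : V} :
    v ∈ F p ↔ ∃ c : Fin (n + 1) → V, (∀ r : Fin (n + 1), c r ∈ F r ⊓ G (n - r)) ∧
      (∀ r : Fin (n + 1), (r : ℕ) < p → c r = 0) ∧ v = ∑ r, c r := by
  refine ⟨exists_decomposition_of_mem hF hFend hcodisj hp, ?_⟩
  rintro ⟨c, hc, hzero, rfl⟩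
  exact sum_mem_of_eq_zero_of_lt hF (fun r => (AddSubgroup.mem_inf.1 (hc r)).1) hzero

end OpposedFiltrations

theorem Function.Involutive.image_inter_image {α : Type*} {σ : α → α}
    (hσ : Function.Involutive σ) (A B : Set α) : σ '' (A ∩ σ '' B) = B ∩ σ '' A := by
  rw [Set.image_inter hσ.injective, Set.image_image]
  simp only [hσ _, Set.image_id', Set.inter_comm]

theorem image_hodgeSummand {V : Type*} [AddCommGroup V] [Module ℂ V] {n : ℕ} {σ : V → V}
    (hσ : Function.Involutive σ) (F : ℕ → Submodule ℂ V) (p : Fin (n + 1)) :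
    σ '' hodgeSummand σ F p = hodgeSummand σ F p.rev := by
  have hrev : (p.rev : ℕ) = n - p := by rw [Fin.val_rev]; omega
  have hrev' : n - (n - (p : ℕ)) = p := Nat.sub_sub_self p.is_le
  simp only [hodgeSummand, hσ.image_inter_image, hrev, hrev']

theorem opposed_filtration_gives_hodge_decomposition_general
    (V : Type*) [AddCommGroup V] [Module ℂ V]
    (σ : V → V)
    (hσadd : ∀ x y : V, σ (x + y) = σ x + σ y)
    (hσinv : ∀ v : V, σ (σ v) = v)
    (n : ℕ) (F : ℕ → Submodule ℂ V)
    (hdesc : ∀ p : ℕ, F (p + 1) ≤ F p)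
    (hF0 : F 0 = ⊤) (hFend : F (n + 1) = ⊥)
    (hopp : ∀ p : ℕ, p ≤ n + 1 →
      ((F p : Set V) ∩ σ '' (F (n + 1 - p) : Set V) = {0}) ∧
      (∀ v : V, ∃ x ∈ F p, ∃ y ∈ F (n + 1 - p), v = x + σ y)) :
    (∀ v : V, ∃! c : Fin (n + 1) → V,
        (∀ p : Fin (n + 1), c p ∈ hodgeSummand σ F p) ∧ v = ∑ p, c p) ∧
    (∀ p : Fin (n + 1), σ '' hodgeSummand σ F p = hodgeSummand σ F p.rev) ∧
    (∀ p : ℕ, p ≤ n → (F p : Set V) =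
      {v : V | ∃ c : Fin (n + 1) → V,
        (∀ r : Fin (n + 1), c r ∈ hodgeSummand σ F r) ∧
        (∀ r : Fin (n + 1), (r : ℕ) < p → c r = 0) ∧ v = ∑ r, c r}) := by
  let F' : ℕ → AddSubgroup V := fun p => (F p).toAddSubgroup
  let G : ℕ → AddSubgroup V := fun p => (F' p).map (AddMonoidHom.mk' σ hσadd)
  -- `hodgeSummand σ F p` is definitionally the carrier of `F' p ⊓ G (n - p)`.
  have hanti : Antitone F' := antitone_nat_of_succ_le hdesc
  have hF'end : F' (n + 1) = ⊥ := by simp [F', hFend]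
  have hdisj : ∀ p ≤ n, Disjoint (F' (p + 1)) (G (n - p)) := fun p hp => by
    have h := (hopp (p + 1) (by omega)).1
    rw [Nat.add_sub_add_right] at h
    exact disjoint_iff.2 (SetLike.coe_injective h)
  have hcodisj : ∀ p ≤ n, Codisjoint (F' (p + 1)) (G (n - p)) := fun p hp => by
    refine codisjoint_iff.2 (eq_top_iff.2 fun v _ => ?_)
    obtain ⟨x, hx, y, hy, rfl⟩ := (hopp (p + 1) (by omega)).2 v
    rw [Nat.add_sub_add_right] at hy
    exact AddSubgroup.mem_sup.2 ⟨x, hx, σ y, ⟨y, hy, rfl⟩, rfl⟩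
  refine ⟨fun v => ?_, image_hodgeSummand hσinv F, fun p hp => ?_⟩
  · obtain ⟨c, hc, -, hv⟩ := OpposedFiltrations.exists_decomposition_of_mem hanti hF'end
      hcodisj (Nat.zero_le _) (by simp [F', hF0] : v ∈ F' 0)
    exact ⟨c, ⟨hc, hv⟩, fun c' hc' =>
      OpposedFiltrations.eq_of_sum_eq hanti hdisj hc'.1 hc (hc'.2 ▸ hv)⟩
  · exact Set.ext fun v =>
      OpposedFiltrations.mem_iff_exists_decomposition hanti hF'end hcodisj (by omega)

theorem opposed_filtration_gives_hodge_decomposition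
    (V : Type*) [AddCommGroup V] [Module ℂ V] [FiniteDimensional ℂ V]
    (σ : V → V)
    (hσadd : ∀ x y : V, σ (x + y) = σ x + σ y)
    (hσsmul : ∀ (c : ℂ) (v : V), σ (c • v) = (starRingEnd ℂ c) • σ v)
    (hσinv : ∀ v : V, σ (σ v) = v)
    (n : ℕ) (F : ℕ → Submodule ℂ V)
    (hdesc : ∀ p : ℕ, F (p + 1) ≤ F p)
    (hF0 : F 0 = ⊤) (hFend : F (n + 1) = ⊥)
    (hopp : ∀ p : ℕ, p ≤ n + 1 →
      ((F p : Set V) ∩ σ '' (F (n + 1 - p) : Set V) = {0}) ∧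
      (∀ v : V, ∃ x ∈ F p, ∃ y ∈ F (n + 1 - p), v = x + σ y)) :
    (∀ v : V, ∃! c : Fin (n + 1) → V,
        (∀ p : Fin (n + 1), c p ∈ hodgeSummand σ F p) ∧ v = ∑ p, c p) ∧
    (∀ p : Fin (n + 1), σ '' hodgeSummand σ F p = hodgeSummand σ F p.rev) ∧
    (∀ p : ℕ, p ≤ n → (F p : Set V) =
      {v : V | ∃ c : Fin (n + 1) → V,
        (∀ r : Fin (n + 1), c r ∈ hodgeSummand σ F r) ∧
        (∀ r : Fin (n + 1), (r : ℕ) < p → c r = 0) ∧ v = ∑ r, c r}) :=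
  opposed_filtration_gives_hodge_decomposition_general V σ hσadd hσinv n F hdesc hF0 hFend hopp
end

section
/- Let V be a finite-dimensional complex vector space, σ an antilinear involution on V, k an integer, and h : ℂˣ → GL(V) an algebraic representation such that σ ∘ h(z) = h(z) ∘ σ for all z ∈ ℂˣ, and h(t) = t^k • id for every positive real number t. Then V is the internal direct sum of the weight spaces V^{p,q} over all pairs of integers (p, q) with p + q = k (only finitely many of which are nonzero), and σ(V^{p,q}) = V^{q,p} for all such p, q. That is, every algebraic representation of ℂˣ of weight k commuting with the real structure determines a pure Hodge decomposition of weight k. -/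
/-- The weight space `V^{p,q} = {v | h(z) v = z^p (conj z)^q • v for all z}` of a
representation `h : ℂˣ → GL(V)`. -/
noncomputable def weightSpace {V : Type*} [AddCommGroup V] [Module ℂ V]
    (h : ℂˣ →* (V →ₗ[ℂ] V)ˣ) (p q : ℤ) : Submodule ℂ V :=
  ⨅ z : ℂˣ, Module.End.eigenspace ((h z : V →ₗ[ℂ] V))
    ((z : ℂ) ^ p * (starRingEnd ℂ (z : ℂ)) ^ q)

/-- A representation `h : ℂˣ → GL(V)` is algebraic if in some basis its matrix entries
are polynomials in `z`, `conj z` and `(z * conj z)⁻¹`. -/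
def IsAlgebraicRep {V : Type*} [AddCommGroup V] [Module ℂ V]
    (h : ℂˣ →* (V →ₗ[ℂ] V)ˣ) : Prop :=
  ∃ (n : ℕ) (b : Module.Basis (Fin n) ℂ V) (N : ℕ) (P : Fin n → Fin n → MvPolynomial (Fin 2) ℂ),
    ∀ (z : ℂˣ) (i j : Fin n),
      LinearMap.toMatrix b b ((h z : V →ₗ[ℂ] V)) i j =
        MvPolynomial.eval ![(z : ℂ), (starRingEnd ℂ) (z : ℂ)] (P i j) *
          ((z : ℂ) * (starRingEnd ℂ) (z : ℂ)) ^ (-(N : ℤ))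

/-!
Reading the matrix entries of `h z` as Laurent polynomials in `z` and `conj z` writes `h` as a
finite sum `h z = ∑ᵢ χᵢ z • Aᵢ` of characters `χ_{p,q} z = z ^ p * conj z ^ q`. By Dedekind's
independence of characters, comparing `h (z * w) = h z * h w` coefficientwise shows that each `Aᵢ`
maps into the `χᵢ`-weight space, while `h 1 = 1` gives `∑ᵢ Aᵢ = 1`; so the weight spaces span `V`,
and the same independence makes their sum direct. Evaluating at `z = 2` kills `V^{p,q}` unless
`p + q = k`, and `σ` swaps `V^{p,q}` and `V^{q,p}` because `conj (χ_{p,q} z) = χ_{q,p} z`.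
-/

section Characters

variable {G K V : Type*} [Monoid G] [Field K] [AddCommGroup V] [Module K V]

def charSpace (ρ : G →* Module.End K V) (χ : G →* K) : Submodule K V :=
  ⨅ g, Module.End.eigenspace (ρ g) (χ g)

variable {ρ : G →* Module.End K V}

theorem mem_charSpace_iff {χ : G →* K} {v : V} :
    v ∈ charSpace ρ χ ↔ ∀ g, ρ g v = χ g • v := by
  simp only [charSpace, Submodule.mem_iInf, Module.End.mem_eigenspace_iff]

theorem eq_zero_of_sum_monoidHom_smul_eq_zero {M : Type*} [AddCommGroup M] [Module K M]
    {s : Finset (G →* K)} {f : (G →* K) → M} (hf : ∀ g, ∑ χ ∈ s, χ g • f χ = 0) :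
    ∀ χ ∈ s, f χ = 0 := by
  intro χ hχ
  refine (Module.forall_dual_apply_eq_zero_iff K (f χ)).1 fun φ => ?_
  refine linearIndependent_iff'.1 (linearIndependent_monoidHom G K) s (fun χ => φ (f χ)) ?_ χ hχ
  ext g
  simpa [mul_comm] using congrArg φ (hf g)

variable (ρ) in
theorem iSupIndep_charSpace : iSupIndep (charSpace ρ) := by
  rw [iSupIndep_iff_finsetSum_eq_zero_imp_eq_zero]
  intro s v hv hsum
  refine eq_zero_of_sum_monoidHom_smul_eq_zero fun g => ?_
  calc ∑ χ ∈ s, χ g • v χ = ρ g (∑ χ ∈ s, v χ) := by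
        rw [map_sum]
        exact Finset.sum_congr rfl fun χ hχ => (mem_charSpace_iff.1 (hv χ hχ) g).symm
    _ = 0 := by rw [hsum, map_zero]

theorem range_le_charSpace_of_eq_sum {s : Finset (G →* K)} {A : (G →* K) → Module.End K V}
    (hρ : ∀ g, ρ g = ∑ χ ∈ s, χ g • A χ) {χ : G →* K} (hχ : χ ∈ s) :
    LinearMap.range (A χ) ≤ charSpace ρ χ := by
  have hρA : ∀ g, ρ g * A χ = χ g • A χ := by
    intro g
    refine sub_eq_zero.1 (eq_zero_of_sum_monoidHom_smul_eq_zero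
      (f := fun χ => ρ g * A χ - χ g • A χ) (fun g' => ?_) χ hχ)
    -- expand both sides of `ρ (g * g') = ρ g * ρ g'` as combinations of the characters at `g'`
    have hmul := map_mul ρ g g'
    rw [hρ (g * g'), hρ g', Finset.mul_sum] at hmul
    simp only [smul_sub, Finset.sum_sub_distrib, mul_smul_comm, smul_smul, map_mul] at hmul ⊢
    rw [← hmul, sub_eq_zero]
    exact Finset.sum_congr rfl fun _ _ => by rw [mul_comm]
  rintro _ ⟨w, rfl⟩
  exact mem_charSpace_iff.2 fun g => LinearMap.congr_fun (hρA g) w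

theorem iSup_charSpace_eq_top_of_eq_sum {ι : Type*} {s : Finset ι} {c : ι → G →* K}
    {A : ι → Module.End K V} (hρ : ∀ g, ρ g = ∑ i ∈ s, c i g • A i) :
    ⨆ i ∈ s, charSpace ρ (c i) = ⊤ := by
  classical
  set B : (G →* K) → Module.End K V := fun χ => ∑ i ∈ s with c i = χ, A i
  have hB : ∀ g, ρ g = ∑ χ ∈ s.image c, χ g • B χ := fun g => by
    rw [hρ, ← Finset.sum_fiberwise_of_maps_to fun i hi => Finset.mem_image_of_mem c hi]
    refine Finset.sum_congr rfl fun χ _ => ?_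
    rw [Finset.smul_sum]
    exact Finset.sum_congr rfl fun i hi => by rw [(Finset.mem_filter.1 hi).2]
  have hB1 : ∑ χ ∈ s.image c, B χ = 1 := by simpa using (hB 1).symm
  refine eq_top_iff.2 fun v _ => ?_
  rw [← Module.End.one_apply (R := K) v, ← hB1, LinearMap.sum_apply]
  refine Submodule.sum_mem _ fun χ hχ => ?_
  obtain ⟨i, hi, rfl⟩ := Finset.mem_image.1 hχ
  exact le_iSup₂ (f := fun i (_ : i ∈ s) => charSpace ρ (c i)) i hi
    (range_le_charSpace_of_eq_sum hB hχ ⟨v, rfl⟩)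

end Characters

open Complex

noncomputable def weightChar (p q : ℤ) : ℂˣ →* ℂ where
  toFun z := (z : ℂ) ^ p * starRingEnd ℂ (z : ℂ) ^ q
  map_one' := by simp
  map_mul' z w := by simp only [Units.val_mul, map_mul, mul_zpow]; ring

section weightChar

variable {p q : ℤ}

theorem weightChar_apply_of_eq_ofReal {z : ℂˣ} {t : ℝ} (hz : (z : ℂ) = t) :
    weightChar p q z = ((t ^ (p + q) : ℝ) : ℂ) := by
  have ht : (t : ℂ) ≠ 0 := hz ▸ z.ne_zero
  simp [weightChar, hz, zpow_add₀ ht]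

theorem weightChar_apply_natCast_sub (a b N : ℕ) (z : ℂˣ) :
    weightChar ((a : ℤ) - N) ((b : ℤ) - N) z =
      (z : ℂ) ^ a * starRingEnd ℂ (z : ℂ) ^ b * ((z : ℂ) * starRingEnd ℂ (z : ℂ)) ^ (-(N : ℤ)) := by
  have hz : (z : ℂ) ≠ 0 := z.ne_zero
  have hz' : starRingEnd ℂ (z : ℂ) ≠ 0 := (map_ne_zero _).2 hz
  simp only [weightChar, MonoidHom.coe_mk, OneHom.coe_mk, zpow_sub₀ hz, zpow_sub₀ hz',
    zpow_neg, zpow_natCast, mul_pow]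
  field_simp

theorem weightChar_apply_exp_mul_I (θ : ℝ) :
    weightChar p q (Units.mk0 (exp (θ * I)) (exp_ne_zero _)) = exp ((p - q) * (θ * I)) := by
  simp only [weightChar, MonoidHom.coe_mk, OneHom.coe_mk, Units.val_mk0, ← exp_conj, map_mul,
    conj_ofReal, conj_I, ← exp_int_mul, ← exp_add]
  ring_nf

theorem starRingEnd_weightChar (z : ℂˣ) : starRingEnd ℂ (weightChar p q z) = weightChar q p z := by
  simp [weightChar, mul_comm]

theorem weightChar_inj {p' q' : ℤ} : weightChar p q = weightChar p' q' ↔ p = p' ∧ q = q' := by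
  refine ⟨fun h => ?_, fun ⟨rfl, rfl⟩ => rfl⟩
  have hadd : p + q = p' + q' := by
    have h2 := DFunLike.congr_fun h (Units.mk0 2 two_ne_zero)
    rw [weightChar_apply_of_eq_ofReal (t := 2) (by simp),
      weightChar_apply_of_eq_ofReal (t := 2) (by simp)] at h2
    exact zpow_right_injective₀ two_pos (by norm_num) (ofReal_injective h2)
  have hsub : p - q = p' - q' := by
    by_contra hne
    set m : ℤ := p - q - (p' - q')
    have hm : (m : ℂ) ≠ 0 := by exact_mod_cast sub_ne_zero.2 hne
    -- at `exp (π i / m)` the two characters differ by the factor `exp (π i) = -1`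
    have h' := DFunLike.congr_fun h (Units.mk0 (exp ((Real.pi / m : ℝ) * I)) (exp_ne_zero _))
    rw [weightChar_apply_exp_mul_I, weightChar_apply_exp_mul_I] at h'
    have hsplit : ((p : ℂ) - q) * ((Real.pi / m : ℝ) * I) =
        Real.pi * I + (p' - q') * ((Real.pi / m : ℝ) * I) := by
      push_cast [m] at hm ⊢
      field_simp
      ring
    rw [hsplit, exp_add, exp_pi_mul_I] at h'
    exact exp_ne_zero _ (by linear_combination (-1 / 2 : ℂ) * h')
  omega

end weightChar

section weightSpace

variable {V : Type*} [AddCommGroup V] [Module ℂ V] {h : ℂˣ →* (V →ₗ[ℂ] V)ˣ} {p q : ℤ}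

theorem weightSpace_eq_charSpace (h : ℂˣ →* (V →ₗ[ℂ] V)ˣ) (p q : ℤ) :
    weightSpace h p q = charSpace ((Units.coeHom _).comp h) (weightChar p q) :=
  rfl

theorem mem_weightSpace_iff {v : V} :
    v ∈ weightSpace h p q ↔ ∀ z, (h z : Module.End ℂ V) v = weightChar p q z • v := by
  rw [weightSpace_eq_charSpace, mem_charSpace_iff]
  rfl

theorem weightSpace_eq_bot_of_add_ne {k : ℤ} {z : ℂˣ} {t : ℝ} (ht₀ : 0 < t) (ht₁ : t ≠ 1)
    (hz : (z : ℂ) = t) (hzk : (h z : Module.End ℂ V) = (t : ℂ) ^ k • LinearMap.id)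
    (hpq : p + q ≠ k) : weightSpace h p q = ⊥ := by
  refine eq_bot_iff.2 fun v hv => ?_
  by_contra hv₀
  have hscalar := (mem_weightSpace_iff.1 hv z).symm
  rw [hzk, weightChar_apply_of_eq_ofReal hz, LinearMap.smul_apply, LinearMap.id_apply,
    ← ofReal_zpow] at hscalar
  exact hpq (zpow_right_injective₀ ht₀ ht₁ (ofReal_injective (smul_left_injective ℂ hv₀ hscalar)))

theorem image_weightSpace {σ : V → V}
    (hσsmul : ∀ (c : ℂ) (v : V), σ (c • v) = starRingEnd ℂ c • σ v) (hσinv : ∀ v, σ (σ v) = v)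
    (hcomm : ∀ (z : ℂˣ) (v : V), σ ((h z : Module.End ℂ V) v) = (h z : Module.End ℂ V) (σ v))
    (p q : ℤ) : σ '' (weightSpace h p q : Set V) = weightSpace h q p := by
  have hmaps : ∀ {p q : ℤ} {v : V}, v ∈ weightSpace h p q → σ v ∈ weightSpace h q p :=
    fun hv => mem_weightSpace_iff.2 fun z => by
      rw [← hcomm, mem_weightSpace_iff.1 hv z, hσsmul, starRingEnd_weightChar]
  exact Set.Subset.antisymm (Set.image_subset_iff.2 fun v => hmaps)
    fun w hw => ⟨σ w, hmaps hw, hσinv w⟩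

theorem IsAlgebraicRep.exists_eq_sum_weightChar (halg : IsAlgebraicRep h) :
    ∃ (ι : Type) (s : Finset ι) (e : ι → ℤ × ℤ) (A : ι → Module.End ℂ V),
      ∀ z, (h z : Module.End ℂ V) = ∑ i ∈ s, weightChar (e i).1 (e i).2 z • A i := by
  obtain ⟨n, b, N, P, hP⟩ := halg
  refine ⟨(_ : Fin n × Fin n) × (Fin 2 →₀ ℕ), Finset.univ.sigma fun ij => (P ij.1 ij.2).support,
    fun x => ((x.2 0 : ℤ) - N, (x.2 1 : ℤ) - N),
    fun x => (P x.1.1 x.1.2).coeff x.2 • Matrix.toLin b b (Matrix.single x.1.1 x.1.2 1),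
    fun z => ?_⟩
  conv_lhs => rw [← Matrix.toLin_toMatrix b b (h z : Module.End ℂ V),
    Matrix.matrix_eq_sum_single (LinearMap.toMatrix b b _)]
  rw [Finset.sum_sigma, ← Finset.univ_product_univ, Finset.sum_product, map_sum]
  refine Finset.sum_congr rfl fun i _ => ?_
  rw [map_sum]
  refine Finset.sum_congr rfl fun j _ => ?_
  rw [hP, MvPolynomial.eval_eq', Finset.sum_mul, ← mul_one (Finset.sum _ _), ← smul_eq_mul,
    ← Matrix.smul_single, map_smul, Finset.sum_smul]
  refine Finset.sum_congr rfl fun d _ => ?_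
  rw [smul_smul, weightChar_apply_natCast_sub, Fin.prod_univ_two]
  simp only [Matrix.cons_val_zero, Matrix.cons_val_one]
  ring_nf

end weightSpace

theorem algebraic_rep_weight_k_gives_hodge_decomposition_general
    (V : Type*) [AddCommGroup V] [Module ℂ V] [FiniteDimensional ℂ V]
    (σ : V → V)
    (hσsmul : ∀ (c : ℂ) (v : V), σ (c • v) = (starRingEnd ℂ c) • σ v)
    (hσinv : ∀ v : V, σ (σ v) = v)
    (k : ℤ) (h : ℂˣ →* (V →ₗ[ℂ] V)ˣ)
    (halg : IsAlgebraicRep h)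
    (hcomm : ∀ (z : ℂˣ) (v : V), σ ((h z : V →ₗ[ℂ] V) v) = (h z : V →ₗ[ℂ] V) (σ v))
    (hreal : ∀ (z : ℂˣ) (t : ℝ), 0 < t → (z : ℂ) = (t : ℂ) →
      (h z : V →ₗ[ℂ] V) = ((t : ℂ) ^ k) • LinearMap.id) :
    iSupIndep (fun p : ℤ => weightSpace h p (k - p)) ∧
    (⨆ p : ℤ, weightSpace h p (k - p)) = ⊤ ∧
    Set.Finite {p : ℤ | weightSpace h p (k - p) ≠ ⊥} ∧
    (∀ p q : ℤ, p + q = k →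
      σ '' (weightSpace h p q : Set V) = (weightSpace h q p : Set V)) := by
  have hindep : iSupIndep fun p : ℤ => weightSpace h p (k - p) := by
    simp_rw [weightSpace_eq_charSpace]
    exact (iSupIndep_charSpace _).comp (f := fun p => weightChar p (k - p))
      fun p p' hp => (weightChar_inj.1 hp).1
  have hbot : ∀ p q : ℤ, p + q ≠ k → weightSpace h p q = ⊥ := fun p q =>
    weightSpace_eq_bot_of_add_ne (z := Units.mk0 2 two_ne_zero) two_pos (by norm_num) (by simp)
      (hreal _ 2 two_pos (by simp))
  refine ⟨hindep, eq_top_iff.2 ?_, Submodule.finite_ne_bot_of_iSupIndep hindep,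
    fun p q _ => image_weightSpace hσsmul hσinv hcomm p q⟩
  obtain ⟨ι, s, e, A, hA⟩ := halg.exists_eq_sum_weightChar
  rw [← iSup_charSpace_eq_top_of_eq_sum (ρ := (Units.coeHom _).comp h) hA]
  refine iSup₂_le fun i _ => ?_
  rw [← weightSpace_eq_charSpace]
  by_cases hk : (e i).1 + (e i).2 = k
  · rw [show (e i).2 = k - (e i).1 by omega]
    exact le_iSup (fun p => weightSpace h p (k - p)) (e i).1
  · rw [hbot _ _ hk]
    exact bot_le

theorem algebraic_rep_weight_k_gives_hodge_decomposition
    (V : Type*) [AddCommGroup V] [Module ℂ V] [FiniteDimensional ℂ V]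
    (σ : V → V)
    (hσadd : ∀ x y : V, σ (x + y) = σ x + σ y)
    (hσsmul : ∀ (c : ℂ) (v : V), σ (c • v) = (starRingEnd ℂ c) • σ v)
    (hσinv : ∀ v : V, σ (σ v) = v)
    (k : ℤ) (h : ℂˣ →* (V →ₗ[ℂ] V)ˣ)
    (halg : IsAlgebraicRep h)
    (hcomm : ∀ (z : ℂˣ) (v : V), σ ((h z : V →ₗ[ℂ] V) v) = (h z : V →ₗ[ℂ] V) (σ v))
    (hreal : ∀ (z : ℂˣ) (t : ℝ), 0 < t → (z : ℂ) = (t : ℂ) →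
      (h z : V →ₗ[ℂ] V) = ((t : ℂ) ^ k) • LinearMap.id) :
    iSupIndep (fun p : ℤ => weightSpace h p (k - p)) ∧
    (⨆ p : ℤ, weightSpace h p (k - p)) = ⊤ ∧
    Set.Finite {p : ℤ | weightSpace h p (k - p) ≠ ⊥} ∧
    (∀ p q : ℤ, p + q = k →
      σ '' (weightSpace h p q : Set V) = (weightSpace h q p : Set V)) :=
  algebraic_rep_weight_k_gives_hodge_decomposition_general V σ hσsmul hσinv k h halg hcomm hreal
end

section
/- Let V be a finite-dimensional complex vector space, σ an antilinear involution on V, k an integer, and suppose given complex subspaces W(p, q) of V indexed by pairs of integers (p, q) with p + q = k, only finitely many of which are nonzero, such that V is the internal direct sum of the W(p, q) and σ(W(p, q)) = W(q, p) for all such pairs. Then there exists a group homomorphism h : ℂˣ → GL(V) such that σ ∘ h(z) = h(z) ∘ σ for all z ∈ ℂˣ, h(t) = t^k • id for every positive real t, and for every pair (p, q) with p + q = k the weight space {v ∈ V : h(z) v = z^p (conj z)^q • v for all z ∈ ℂˣ} equals W(p, q). That is, every pure Hodge decomposition of weight k arises from a representation of ℂˣ. -/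
/-!
Let `h(z)` act on `W(p, q)` by the character `χ_{p,q}(z) = z^p (conj z)^q`. Since `V` is the
direct sum of the `W(p, q)`, this is a well-defined homomorphism `ℂˣ → GL(V)`. The antilinear `σ`
carries `W(p, q)` to `W(q, p)` and `conj ∘ χ_{p,q} = χ_{q,p}`, so `σ` commutes with every `h(z)`;
on a positive real `t` every `χ_{p,q}` with `p + q = k` equals `t^k`. Finally, distinct pairs give
distinct characters (evaluating at `2` recovers `p + q`, at `e^i` it recovers `p - q` because `π`
is irrational), so the common eigenspace of `h` for `χ_{p,q}` is exactly `W(p, q)`.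
-/

theorem LinearMap.ext_of_iSup_eq_top {R R₂ M M₂ ι : Type*} [Semiring R] [Semiring R₂]
    [AddCommMonoid M] [AddCommMonoid M₂] [Module R M] [Module R₂ M₂] {τ : R →+* R₂}
    {A : ι → Submodule R M} (hA : ⨆ i, A i = ⊤) {f g : M →ₛₗ[τ] M₂}
    (h : ∀ i, ∀ v ∈ A i, f v = g v) : f = g :=
  LinearMap.ext_on (s := ⋃ i, (A i : Set M)) (by rw [← Submodule.iSup_eq_span, hA])
    fun _ hv ↦ by obtain ⟨i, hi⟩ := Set.mem_iUnion.mp hv; exact h i _ hi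

namespace DirectSum.IsInternal

variable {R M ι : Type*} [CommRing R] [AddCommGroup M] [Module R M] [DecidableEq ι]
  {A : ι → Submodule R M} (hA : IsInternal A)

noncomputable def diagonalEnd (c : ι → R) : Module.End R M :=
  (LinearEquiv.ofBijective (coeLinearMap A) hA).conj
    (DFinsupp.mapRange.linearMap fun i ↦ c i • LinearMap.id)

theorem ofBijective_symm_diagonalEnd_apply (c : ι → R) (v : M) (j : ι) :
    (LinearEquiv.ofBijective (coeLinearMap A) hA).symm (hA.diagonalEnd c v) j =
      c j • (LinearEquiv.ofBijective (coeLinearMap A) hA).symm v j := by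
  simp only [diagonalEnd, LinearEquiv.conj_apply, LinearMap.coe_comp, LinearEquiv.coe_coe,
    Function.comp_apply, LinearEquiv.symm_apply_apply]
  rfl

theorem diagonalEnd_apply_of_mem (c : ι → R) {i : ι} {v : M} (hv : v ∈ A i) :
    hA.diagonalEnd c v = c i • v := by
  refine (LinearEquiv.ofBijective (coeLinearMap A) hA).symm.injective (DFinsupp.ext fun j ↦ ?_)
  rw [ofBijective_symm_diagonalEnd_apply, map_smul, DFinsupp.smul_apply]
  rcases eq_or_ne i j with rfl | hij
  · rfl
  · rw [hA.ofBijective_coeLinearMap_of_mem_ne hij hv, smul_zero, smul_zero]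

theorem diagonalEnd_const (a : R) : hA.diagonalEnd (fun _ ↦ a) = a • LinearMap.id :=
  LinearMap.ext_of_iSup_eq_top hA.submodule_iSup_eq_top fun _ _ hv ↦
    hA.diagonalEnd_apply_of_mem _ hv

noncomputable def diagonalEndHom : (ι → R) →* Module.End R M where
  toFun := hA.diagonalEnd
  map_one' := LinearMap.ext_of_iSup_eq_top hA.submodule_iSup_eq_top fun _ _ hv ↦ by
    rw [hA.diagonalEnd_apply_of_mem _ hv, Pi.one_apply, one_smul, Module.End.one_apply]
  map_mul' c d := LinearMap.ext_of_iSup_eq_top hA.submodule_iSup_eq_top fun _ _ hv ↦ by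
    rw [hA.diagonalEnd_apply_of_mem _ hv, Module.End.mul_apply, hA.diagonalEnd_apply_of_mem _ hv,
      map_smul, hA.diagonalEnd_apply_of_mem _ hv, smul_smul, Pi.mul_apply, mul_comm]

theorem semilinearMap_diagonalEnd_apply {τ : R →+* R} (f : M →ₛₗ[τ] M) (π : ι → ι) (c : ι → R)
    (hf : ∀ i, ∀ v ∈ A i, f v ∈ A (π i)) (hc : ∀ i, τ (c i) = c (π i)) (v : M) :
    f (hA.diagonalEnd c v) = hA.diagonalEnd c (f v) := by
  refine LinearMap.congr_fun (f := f.comp (hA.diagonalEnd c)) (g := (hA.diagonalEnd c).comp f)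
    (LinearMap.ext_of_iSup_eq_top hA.submodule_iSup_eq_top fun i w hw ↦ ?_) v
  rw [LinearMap.comp_apply, LinearMap.comp_apply, hA.diagonalEnd_apply_of_mem _ hw,
    hA.diagonalEnd_apply_of_mem _ (hf i w hw), LinearMap.map_smulₛₗ, hc]

theorem mem_of_ofBijective_symm_apply_eq_zero {i : ι} {v : M}
    (hv : ∀ j ≠ i, (LinearEquiv.ofBijective (coeLinearMap A) hA).symm v j = 0) : v ∈ A i := by
  set x := (LinearEquiv.ofBijective (coeLinearMap A) hA).symm v
  have hx : x = of (fun i ↦ A i) i (x i) := DFinsupp.ext fun j ↦ by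
    rcases eq_or_ne j i with rfl | hji
    · rw [of_eq_same]
    · rw [of_eq_of_ne _ _ _ hji, hv j hji]
  have : v = x i := by
    rw [← coeLinearMap_of A i (x i), ← hx]
    exact ((LinearEquiv.ofBijective (coeLinearMap A) hA).apply_symm_apply v).symm
  exact this ▸ (x i).2

theorem iInf_eigenspace_diagonalEnd [IsDomain R] [Module.IsTorsionFree R M] {Z : Type*}
    (c : Z → ι → R) (i : ι) (hsep : ∀ j ≠ i, ∃ z, c z j ≠ c z i) :
    ⨅ z, Module.End.eigenspace (hA.diagonalEnd (c z)) (c z i) = A i := by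
  refine le_antisymm (fun v hv ↦ hA.mem_of_ofBijective_symm_apply_eq_zero fun j hj ↦ ?_)
    fun v hv ↦ Submodule.mem_iInf _ |>.mpr fun z ↦
      Module.End.mem_eigenspace_iff.mpr (hA.diagonalEnd_apply_of_mem _ hv)
  obtain ⟨z, hz⟩ := hsep j hj
  have heig : hA.diagonalEnd (c z) v = c z i • v :=
    Module.End.mem_eigenspace_iff.mp (Submodule.mem_iInf _ |>.mp hv z)
  have hcomp : c z j • (LinearEquiv.ofBijective (coeLinearMap A) hA).symm v j =
      c z i • (LinearEquiv.ofBijective (coeLinearMap A) hA).symm v j := by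
    rw [← ofBijective_symm_diagonalEnd_apply, heig, map_smul]
    rfl
  exact (smul_eq_zero_iff_right (sub_ne_zero.mpr hz)).mp (by rw [sub_smul, hcomp, sub_self])

end DirectSum.IsInternal

theorem Complex.exp_intCast_mul_I_injective : Function.Injective fun n : ℤ ↦ exp (n * I) := by
  intro m n hmn
  obtain ⟨l, hl⟩ := exp_eq_exp_iff_exists_int.mp hmn
  have hreal : ((m - n : ℤ) : ℝ) = ((2 * l : ℤ) : ℝ) * Real.pi := by
    have : ((m - n : ℤ) : ℂ) = ((2 * l : ℤ) : ℂ) * Real.pi := by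
      apply mul_right_cancel₀ I_ne_zero
      push_cast
      linear_combination hl
    exact_mod_cast this
  rcases eq_or_ne l 0 with rfl | hl0
  · simpa [sub_eq_zero] using hreal
  · exact absurd (hreal ▸ irrational_pi.intCast_mul (mul_ne_zero two_ne_zero hl0))
      (Int.not_irrational _)

@[simps]
noncomputable def hodgeCharacter (pq : ℤ × ℤ) : ℂˣ →* ℂ where
  toFun z := (z : ℂ) ^ pq.1 * starRingEnd ℂ z ^ pq.2
  map_one' := by simp
  map_mul' z w := by simp only [Units.val_mul, map_mul, mul_zpow]; ring

theorem starRingEnd_hodgeCharacter (pq : ℤ × ℤ) (z : ℂˣ) :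
    starRingEnd ℂ (hodgeCharacter pq z) = hodgeCharacter pq.swap z := by
  simp [mul_comm]

theorem hodgeCharacter_of_val_eq_ofReal (pq : ℤ × ℤ) {z : ℂˣ} {t : ℝ} (hz : (z : ℂ) = t) :
    hodgeCharacter pq z = (t : ℂ) ^ (pq.1 + pq.2) := by
  have ht : (t : ℂ) ≠ 0 := hz ▸ z.ne_zero
  simp [hz, zpow_add₀ ht]

theorem hodgeCharacter_of_val_eq_exp_I (pq : ℤ × ℤ) {z : ℂˣ}
    (hz : (z : ℂ) = Complex.exp Complex.I) :
    hodgeCharacter pq z = Complex.exp ((pq.1 - pq.2 : ℤ) * Complex.I) := by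
  simp only [hodgeCharacter_apply, hz, ← Complex.exp_conj, Complex.conj_I, ← Complex.exp_int_mul,
    ← Complex.exp_add]
  push_cast
  ring_nf

theorem hodgeCharacter_injective : Function.Injective hodgeCharacter := by
  rintro ⟨p, q⟩ ⟨p', q'⟩ h
  have hweight : p + q = p' + q' := by
    have h2 : ((Units.mk0 2 two_ne_zero : ℂˣ) : ℂ) = ((2 : ℝ) : ℂ) := by simp
    have := DFunLike.congr_fun h (Units.mk0 2 two_ne_zero)
    rw [hodgeCharacter_of_val_eq_ofReal _ h2, hodgeCharacter_of_val_eq_ofReal _ h2,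
      ← Complex.ofReal_zpow, ← Complex.ofReal_zpow, Complex.ofReal_inj] at this
    exact zpow_right_injective₀ two_pos (by norm_num) this
  have htype : p - q = p' - q' := by
    have he : ((Units.mk0 _ (Complex.exp_ne_zero Complex.I) : ℂˣ) : ℂ) = Complex.exp Complex.I :=
      rfl
    have := DFunLike.congr_fun h (Units.mk0 _ (Complex.exp_ne_zero Complex.I))
    rw [hodgeCharacter_of_val_eq_exp_I _ he, hodgeCharacter_of_val_eq_exp_I _ he] at this
    exact Complex.exp_intCast_mul_I_injective this
  ext <;> omega

theorem hodge_decomposition_comes_from_representation_general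
    (V : Type*) [AddCommGroup V] [Module ℂ V]
    (σ : V → V)
    (hσadd : ∀ x y : V, σ (x + y) = σ x + σ y)
    (hσsmul : ∀ (c : ℂ) (v : V), σ (c • v) = (starRingEnd ℂ c) • σ v)
    (k : ℤ) (W : ℤ × ℤ → Submodule ℂ V)
    (hindep : iSupIndep (fun x : {x : ℤ × ℤ // x.1 + x.2 = k} => W x.1))
    (hspan : (⨆ x : {x : ℤ × ℤ // x.1 + x.2 = k}, W x.1) = ⊤)
    (hconj : ∀ p q : ℤ, p + q = k → σ '' (W (p, q) : Set V) = (W (q, p) : Set V)) :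
    ∃ h : ℂˣ →* (V →ₗ[ℂ] V)ˣ,
      (∀ (z : ℂˣ) (v : V), σ ((h z : V →ₗ[ℂ] V) v) = (h z : V →ₗ[ℂ] V) (σ v)) ∧
      (∀ (z : ℂˣ) (t : ℝ), 0 < t → (z : ℂ) = (t : ℂ) →
        (h z : V →ₗ[ℂ] V) = ((t : ℂ) ^ k) • LinearMap.id) ∧
      (∀ p q : ℤ, p + q = k → weightSpace h p q = W (p, q)) := by
  have hW : DirectSum.IsInternal fun x : {x : ℤ × ℤ // x.1 + x.2 = k} ↦ W x.1 :=
    (DirectSum.isInternal_submodule_iff_iSupIndep_and_iSup_eq_top _).mpr ⟨hindep, hspan⟩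
  let χ : ℂˣ →* ({x : ℤ × ℤ // x.1 + x.2 = k} → ℂ) := MonoidHom.pi fun i ↦ hodgeCharacter i.1
  refine ⟨(hW.diagonalEndHom.comp χ).toHomUnits, fun z v ↦ ?_, fun z t _ hz ↦ ?_,
    fun p q hpq ↦ ?_⟩
  · let σₗ : V →ₗ⋆[ℂ] V := { toFun := σ, map_add' := hσadd, map_smul' := hσsmul }
    refine hW.semilinearMap_diagonalEnd_apply σₗ (fun i ↦ ⟨i.1.swap, by simpa [add_comm] using i.2⟩)
      (χ z) (fun ⟨(p, q), hpq⟩ v hv ↦ ?_) (fun i ↦ starRingEnd_hodgeCharacter i.1 z) v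
    exact (hconj p q hpq).subset ⟨v, hv, rfl⟩
  · have hχ : χ z = fun _ ↦ (t : ℂ) ^ k :=
      funext fun i ↦ (hodgeCharacter_of_val_eq_ofReal i.1 hz).trans (by rw [i.2])
    exact (congrArg hW.diagonalEnd hχ).trans (hW.diagonalEnd_const _)
  · refine hW.iInf_eigenspace_diagonalEnd (fun z ↦ χ z) ⟨(p, q), hpq⟩ fun j hj ↦ ?_
    by_contra! hχ
    exact hj (Subtype.ext (hodgeCharacter_injective (MonoidHom.ext hχ)))

theorem hodge_decomposition_comes_from_representation
    (V : Type*) [AddCommGroup V] [Module ℂ V] [FiniteDimensional ℂ V]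
    (σ : V → V)
    (hσadd : ∀ x y : V, σ (x + y) = σ x + σ y)
    (hσsmul : ∀ (c : ℂ) (v : V), σ (c • v) = (starRingEnd ℂ c) • σ v)
    (hσinv : ∀ v : V, σ (σ v) = v)
    (k : ℤ) (W : ℤ × ℤ → Submodule ℂ V)
    (hindep : iSupIndep (fun x : {x : ℤ × ℤ // x.1 + x.2 = k} => W x.1))
    (hspan : (⨆ x : {x : ℤ × ℤ // x.1 + x.2 = k}, W x.1) = ⊤)
    (hfin : Set.Finite {x : ℤ × ℤ | x.1 + x.2 = k ∧ W x ≠ ⊥})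
    (hconj : ∀ p q : ℤ, p + q = k → σ '' (W (p, q) : Set V) = (W (q, p) : Set V)) :
    ∃ h : ℂˣ →* (V →ₗ[ℂ] V)ˣ,
      (∀ (z : ℂˣ) (v : V), σ ((h z : V →ₗ[ℂ] V) v) = (h z : V →ₗ[ℂ] V) (σ v)) ∧
      (∀ (z : ℂˣ) (t : ℝ), 0 < t → (z : ℂ) = (t : ℂ) →
        (h z : V →ₗ[ℂ] V) = ((t : ℂ) ^ k) • LinearMap.id) ∧
      (∀ p q : ℤ, p + q = k → weightSpace h p q = W (p, q)) :=
  hodge_decomposition_comes_from_representation_general V σ hσadd hσsmul k W hindep hspan hconj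
end

section
/- Let V be a finite-dimensional complex vector space and h : ℂˣ → GL(V) an algebraic representation. For each integer k, let V_k = {v ∈ V : h(t) v = t^k • v for all positive real t}. Then V is the internal direct sum of the subspaces V_k over k ∈ ℤ (only finitely many nonzero), and each V_k is invariant under h(z) for every z ∈ ℂˣ. That is, every polynomial ℂˣ-action on V decomposes as a direct sum of actions of pure weights k. -/
/-- The subspace `V_k = {v | h(t) v = t^k • v for all positive real t}`. -/
noncomputable def realWeightSpace {V : Type*} [AddCommGroup V] [Module ℂ V]
    (h : ℂˣ →* (V →ₗ[ℂ] V)ˣ) (k : ℤ) : Submodule ℂ V :=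
  ⨅ u : {u : ℂˣ // ∃ t : ℝ, 0 < t ∧ (u : ℂ) = (t : ℂ)},
    Module.End.eigenspace ((h u : V →ₗ[ℂ] V)) (((u : ℂˣ) : ℂ) ^ k)

open Finset Polynomial

theorem eq_zero_of_sum_pow_smul_eq_zero {K W : Type*} [Field K] [AddCommGroup W] [Module K W]
    {S : Set K} (hS : S.Infinite) {D : ℕ} {x : ℕ → W}
    (hx : ∀ t ∈ S, ∑ m ∈ range D, t ^ m • x m = 0) {m : ℕ} (hm : m < D) : x m = 0 := by
  refine (Module.forall_dual_apply_eq_zero_iff K (x m)).mp fun φ => ?_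
  set p : K[X] := ∑ l ∈ range D, monomial l (φ (x l))
  have hp : p = 0 := by
    refine p.eq_zero_of_infinite_isRoot (hS.mono fun t ht => ?_)
    simpa [p, eval_finsetSum, mul_comm] using congrArg φ (hx t ht)
  simpa [p, finsetSum_coeff, coeff_monomial, hm] using congrArg (coeff · m) hp

theorem mul_coeff_eq_pow_smul_of_multiplicative {K A : Type*} [Field K] [Ring A] [Algebra K A]
    {S : Set K} (hS : S.Infinite) {D : ℕ} {C : ℕ → A}
    (hmul : ∀ s ∈ S, ∀ t ∈ S, ∑ m ∈ range D, (s * t) ^ m • C m =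
      (∑ m ∈ range D, s ^ m • C m) * ∑ m ∈ range D, t ^ m • C m)
    {s : K} (hs : s ∈ S) {m : ℕ} (hm : m < D) :
    (∑ l ∈ range D, s ^ l • C l) * C m = s ^ m • C m := by
  refine (sub_eq_zero.mp (eq_zero_of_sum_pow_smul_eq_zero hS
    (x := fun l => s ^ l • C l - (∑ l ∈ range D, s ^ l • C l) * C l) (fun t ht => ?_) hm)).symm
  simp only [smul_sub, sum_sub_distrib, smul_smul, ← mul_smul_comm, ← mul_sum, ← mul_pow,
    mul_comm _ s, hmul s hs t ht, sub_self]

section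

variable {V : Type*} [AddCommGroup V] [Module ℂ V] {h : ℂˣ →* (V →ₗ[ℂ] V)ˣ}

theorem IsAlgebraicRep.exists_pow_smul_eq_sum_pow_smul (halg : IsAlgebraicRep h) :
    ∃ (N D : ℕ) (C : ℕ → Module.End ℂ V), ∀ u : ℂˣ, starRingEnd ℂ u = u →
      (u : ℂ) ^ (2 * N) • (h u : Module.End ℂ V) = ∑ m ∈ range D, (u : ℂ) ^ m • C m := by
  obtain ⟨n, b, N, P, hP⟩ := halg
  set q : Fin n → Fin n → ℂ[X] := fun i j => MvPolynomial.aeval (fun _ => X) (P i j)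
  have hq (z : ℂ) (i j : Fin n) : (q i j).eval z = MvPolynomial.eval (fun _ => z) (P i j) := by
    rw [← coe_aeval_eq_eval, MvPolynomial.comp_aeval_apply]
    simp only [aeval_X]
    rfl
  obtain ⟨D, hD⟩ : ∃ D, ∀ i j, (q i j).natDegree < D := by
    obtain ⟨D, hD⟩ := (Set.finite_range fun ij : Fin n × Fin n => (q ij.1 ij.2).natDegree).bddAbove
    exact ⟨D + 1, fun i j => Nat.lt_succ_of_le (hD ⟨(i, j), rfl⟩)⟩
  refine ⟨N, D, fun m => Matrix.toLin b b (.of fun i j => (q i j).coeff m), fun u hu => ?_⟩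
  apply (LinearMap.toMatrix b b).injective
  ext i j
  simp only [map_smul, map_sum, LinearMap.toMatrix_toLin, Matrix.smul_apply, Matrix.sum_apply,
    Matrix.of_apply, hP, hu, smul_eq_mul]
  rw [← (eval_eq_sum_range' (hD i j) _).trans (sum_congr rfl fun _ _ => mul_comm _ _), hq]
  have hconst : ![(u : ℂ), u] = fun _ => (u : ℂ) := by ext k; fin_cases k <;> rfl
  rw [hconst, zpow_neg, zpow_natCast, mul_left_comm, pow_mul, sq,
    mul_inv_cancel₀ (pow_ne_zero _ (mul_ne_zero u.ne_zero u.ne_zero)), mul_one]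

theorem mem_realWeightSpace_iff {k : ℤ} {v : V} :
    v ∈ realWeightSpace h k ↔
      ∀ u : ℂˣ, (∃ t : ℝ, 0 < t ∧ (u : ℂ) = t) → (h u : Module.End ℂ V) v = (u : ℂ) ^ k • v := by
  simp only [realWeightSpace, Submodule.mem_iInf, Module.End.mem_eigenspace_iff, Subtype.forall]

theorem realWeightSpace_le_eigenspace (k : ℤ) {u : ℂˣ} (hu : ∃ t : ℝ, 0 < t ∧ (u : ℂ) = t) :
    realWeightSpace h k ≤ Module.End.eigenspace (h u : Module.End ℂ V) ((u : ℂ) ^ k) :=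
  fun _ hv => Module.End.mem_eigenspace_iff.mpr (mem_realWeightSpace_iff.mp hv u hu)

theorem iSupIndep_realWeightSpace : iSupIndep (realWeightSpace h) := by
  set two : ℂˣ := Units.mk0 2 two_ne_zero
  have hinj : Function.Injective fun k : ℤ => (two : ℂ) ^ k := by
    intro k l hkl
    have hreal : (((2 : ℝ) ^ k : ℝ) : ℂ) = (((2 : ℝ) ^ l : ℝ) : ℂ) := by push_cast; exact hkl
    exact zpow_right_injective₀ (by norm_num) (by norm_num) (Complex.ofReal_injective hreal)
  exact ((Module.End.eigenspaces_iSupIndep (h two : Module.End ℂ V)).comp hinj).mono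
    fun k => realWeightSpace_le_eigenspace k ⟨2, two_pos, by simp [two]⟩

theorem map_realWeightSpace_le (k : ℤ) (z : ℂˣ) :
    (realWeightSpace h k).map (h z : Module.End ℂ V) ≤ realWeightSpace h k := by
  rintro _ ⟨v, hv, rfl⟩
  rw [SetLike.mem_coe, mem_realWeightSpace_iff] at hv
  rw [mem_realWeightSpace_iff]
  intro u hu
  have hcomm : (h u : Module.End ℂ V) ((h z : Module.End ℂ V) v) =
      (h z : Module.End ℂ V) ((h u : Module.End ℂ V) v) := by
    rw [← Module.End.mul_apply, ← Units.val_mul, ← map_mul, mul_comm, map_mul, Units.val_mul,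
      Module.End.mul_apply]
  rw [hcomm, hv u hu, map_smul]

theorem finite_setOf_realWeightSpace_ne_bot [FiniteDimensional ℂ V] :
    {k | realWeightSpace h k ≠ ⊥}.Finite :=
  have := (iSupIndep_realWeightSpace (h := h)).fintypeNeBotOfFiniteDimensional
  Set.finite_coe_iff.mp (Finite.of_fintype {k // realWeightSpace h k ≠ ⊥})

theorem IsAlgebraicRep.exists_weight_decomposition (halg : IsAlgebraicRep h) :
    ∃ (N D : ℕ) (C : ℕ → Module.End ℂ V), ∑ m ∈ range D, C m = 1 ∧
      ∀ m < D, ∀ u : ℂˣ, starRingEnd ℂ u = u →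
        (h u : Module.End ℂ V) * C m = (u : ℂ) ^ ((m : ℤ) - 2 * N) • C m := by
  obtain ⟨N, D, C, hC⟩ := halg.exists_pow_smul_eq_sum_pow_smul
  set S : Set ℂ := Units.val '' {u : ℂˣ | starRingEnd ℂ u = u}
  have hS : S.Infinite :=
    Set.infinite_of_injective_forall_mem (f := fun n : ℕ => (n : ℂ) + 1)
      (fun a b hab => by simpa using hab)
      fun n => ⟨Units.mk0 _ (Nat.cast_add_one_ne_zero n), by simp, rfl⟩
  have hmul : ∀ s ∈ S, ∀ t ∈ S, ∑ m ∈ range D, (s * t) ^ m • C m =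
      (∑ m ∈ range D, s ^ m • C m) * ∑ m ∈ range D, t ^ m • C m := by
    rintro _ ⟨u, hu : starRingEnd ℂ u = u, rfl⟩ _ ⟨v, hv : starRingEnd ℂ v = v, rfl⟩
    rw [← hC u hu, ← hC v hv, ← Units.val_mul, ← hC (u * v) (by simp [hu, hv]), map_mul,
      Units.val_mul, Units.val_mul, mul_pow, smul_mul_smul_comm]
  refine ⟨N, D, C, by simpa using (hC 1 (by simp)).symm, fun m hm u hu => ?_⟩
  have hmC := mul_coeff_eq_pow_smul_of_multiplicative hS hmul ⟨u, hu, rfl⟩ hm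
  rw [← hC u hu, smul_mul_assoc] at hmC
  rw [zpow_sub₀ u.ne_zero, zpow_natCast, div_eq_inv_mul, mul_smul,
    show (u : ℂ) ^ (2 * (N : ℤ)) = (u : ℂ) ^ (2 * N) by norm_cast, ← hmC, smul_smul,
    inv_mul_cancel₀ (pow_ne_zero _ u.ne_zero), one_smul]

theorem IsAlgebraicRep.iSup_realWeightSpace_eq_top (halg : IsAlgebraicRep h) :
    ⨆ k, realWeightSpace h k = ⊤ := by
  obtain ⟨N, D, C, hsum, hweight⟩ := halg.exists_weight_decomposition
  refine eq_top_iff.mpr fun v _ => ?_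
  have hv : v = ∑ m ∈ range D, C m v := by
    rw [← LinearMap.sum_apply, hsum, Module.End.one_apply]
  rw [hv]
  refine Submodule.sum_mem _ fun m hm => Submodule.mem_iSup_of_mem ((m : ℤ) - 2 * N) ?_
  rw [mem_realWeightSpace_iff]
  rintro u ⟨t, -, hu⟩
  have := congrArg (· v) (hweight m (mem_range.mp hm) u (by rw [hu, Complex.conj_ofReal]))
  simpa using this

end

theorem algebraic_rep_decomposes_into_pure_weights
    (V : Type*) [AddCommGroup V] [Module ℂ V] [FiniteDimensional ℂ V]
    (h : ℂˣ →* (V →ₗ[ℂ] V)ˣ)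
    (halg : IsAlgebraicRep h) :
    iSupIndep (fun k : ℤ => realWeightSpace h k) ∧
    (⨆ k : ℤ, realWeightSpace h k) = ⊤ ∧
    Set.Finite {k : ℤ | realWeightSpace h k ≠ ⊥} ∧
    (∀ (k : ℤ) (z : ℂˣ),
      Submodule.map ((h z : V →ₗ[ℂ] V)) (realWeightSpace h k) ≤ realWeightSpace h k) :=
  ⟨iSupIndep_realWeightSpace, halg.iSup_realWeightSpace_eq_top,
    finite_setOf_realWeightSpace_ne_bot, map_realWeightSpace_le⟩
end

section
/- Let V be a finite-dimensional complex vector space and h : ℂˣ → GL(V) an algebraic representation. If v ∈ V is a nonzero simultaneous eigenvector of the family {h(z)}, i.e., there is a function λ : ℂˣ → ℂ with h(z) v = λ(z) • v for all z ∈ ℂˣ, then λ takes values in ℂˣ, is a group homomorphism, and there exist integers p, q such that λ(z) = z^p (conj z)^q for all z ∈ ℂˣ. In other words, the characters occurring in an algebraic representation of ℂˣ are exactly monomials in z and conj z. -/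
/-!
Since `v` is a simultaneous eigenvector, `lam` is a character of `ℂˣ`. Reading off a coordinate
in which `v` is nonzero, `lam z * (z * conj z) ^ N = Q (z, conj z)` for a polynomial `Q`, and
then `Q (z w, conj (z w)) = Q (z, conj z) * Q (w, conj w)`. The points `(z, conj z)` are Zariski
dense in `ℂ²` (after the change of variables `X ± i Y` they form `ℝ²`), so
`Q (x a, y b) = Q (x, y) * Q (a, b)` identically. Hence `x ↦ Q (x, 1)` and `y ↦ Q (1, y)` are
multiplicative polynomials, that is monomials `x ^ j` and `y ^ k`, so `Q = X ^ j * Y ^ k` and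
`lam z = z ^ (j - N) * conj z ^ (k - N)`.
-/

open MvPolynomial ComplexConjugate

theorem Polynomial.eq_X_pow_of_eval_mul {R : Type*} [CommRing R] [IsDomain R] [Infinite R]
    {g : Polynomial R} (h1 : g.eval 1 = 1) (hmul : ∀ s t, g.eval (s * t) = g.eval s * g.eval t) :
    g = X ^ g.natDegree := by
  have hlc : g.leadingCoeff ≠ 0 := leadingCoeff_ne_zero.2 fun hg => by simp [hg] at h1
  refine eq_of_infinite_eval_eq _ _ ((Set.finite_singleton 0).infinite_compl.mono fun s hs => ?_)
  have hs : s ≠ 0 := hs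
  -- compare leading coefficients in `g(sX) = g(s) g(X)`
  have hcomp : g.comp (C s * X) = C (g.eval s) * g := Polynomial.funext fun t => by simp [hmul]
  have := congrArg leadingCoeff hcomp
  rw [leadingCoeff_comp (by simp [natDegree_C_mul_X s hs]), leadingCoeff_mul, leadingCoeff_C,
    leadingCoeff_X, mul_one, leadingCoeff_mul, leadingCoeff_C] at this
  simpa using mul_right_cancel₀ hlc (this.symm.trans (mul_comm _ _))

namespace MvPolynomial

variable {R : Type*} [CommRing R]

theorem eval_bind₁_vec₂ {σ : Type*} (x : σ → R) (p q : MvPolynomial σ R)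
    (Q : MvPolynomial (Fin 2) R) :
    eval x (bind₁ ![p, q] Q) = eval ![eval x p, eval x q] Q := by
  rw [eval, eval₂Hom_bind₁]
  congr 2
  funext i
  fin_cases i <;> rfl

theorem polynomial_eval_aeval_vec₂ (t : R) (p q : Polynomial R) (Q : MvPolynomial (Fin 2) R) :
    (aeval ![p, q] Q).eval t = eval ![p.eval t, q.eval t] Q := by
  have hvec : (fun i => (![p, q] i).eval t) = ![p.eval t, q.eval t] := by
    funext i
    fin_cases i <;> rfl
  rw [← hvec, ← Polynomial.coe_aeval_eq_eval, comp_aeval_apply]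
  rfl

theorem eval_eq_pow_mul_pow_of_eval_mul [IsDomain R] [Infinite R] {Q : MvPolynomial (Fin 2) R}
    (h1 : eval ![1, 1] Q = 1)
    (hmul : ∀ x y a b, eval ![x * a, y * b] Q = eval ![x, y] Q * eval ![a, b] Q) :
    ∃ j k : ℕ, ∀ x y, eval ![x, y] Q = x ^ j * y ^ k := by
  set g₀ : Polynomial R := aeval ![Polynomial.X, 1] Q
  set g₁ : Polynomial R := aeval ![1, Polynomial.X] Q
  have hg₀ (x : R) : g₀.eval x = eval ![x, 1] Q := by simp [g₀, polynomial_eval_aeval_vec₂]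
  have hg₁ (y : R) : g₁.eval y = eval ![1, y] Q := by simp [g₁, polynomial_eval_aeval_vec₂]
  have e₀ := Polynomial.eq_X_pow_of_eval_mul (g := g₀) (by rw [hg₀, h1])
    fun s t => by simpa [hg₀] using hmul s 1 t 1
  have e₁ := Polynomial.eq_X_pow_of_eval_mul (g := g₁) (by rw [hg₁, h1])
    fun s t => by simpa [hg₁] using hmul 1 s 1 t
  generalize g₀.natDegree = j at e₀
  generalize g₁.natDegree = k at e₁
  refine ⟨j, k, fun x y => ?_⟩
  calc eval ![x, y] Q = eval ![x * 1, 1 * y] Q := by simp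
    _ = g₀.eval x * g₁.eval y := by rw [hmul, hg₀, hg₁]
    _ = x ^ j * y ^ k := by simp [e₀, e₁]

theorem eq_of_eval_conj_eq {P Q : MvPolynomial (Fin 2) ℂ}
    (h : ∀ z : ℂˣ, eval ![(z : ℂ), conj (z : ℂ)] P = eval ![(z : ℂ), conj (z : ℂ)] Q) :
    P = Q := by
  -- `(X, Y) ↦ (X + iY, X - iY)` is invertible and maps `ℝ × ℝ` onto `{(z, conj z)}`.
  set φ : MvPolynomial (Fin 2) ℂ →ₐ[ℂ] MvPolynomial (Fin 2) ℂ :=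
    bind₁ ![X 0 + C Complex.I * X 1, X 0 - C Complex.I * X 1]
  set ψ : MvPolynomial (Fin 2) ℂ →ₐ[ℂ] MvPolynomial (Fin 2) ℂ :=
    bind₁ ![C 2⁻¹ * (X 0 + X 1), C (2 * Complex.I)⁻¹ * (X 0 - X 1)]
  have hψφ (p : MvPolynomial (Fin 2) ℂ) : ψ (φ p) = p := by
    rw [← AlgHom.comp_apply]
    conv_rhs => rw [← AlgHom.id_apply (R := ℂ) p]
    congr 1
    refine algHom_ext fun i => MvPolynomial.funext fun x => ?_
    fin_cases i
    · simp [φ, ψ]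
      linear_combination (-(2⁻¹ * (x 0 - x 1))) * Complex.I_sq
    · simp [φ, ψ]
      linear_combination (2⁻¹ * (x 0 - x 1)) * Complex.I_sq
  suffices φ P = φ Q by rw [← hψφ P, this, hψφ]
  have hreal : (Set.range ((↑) : ℝ → ℂ) \ {0}).Infinite :=
    (Set.infinite_range_of_injective Complex.ofReal_injective).sdiff (Set.finite_singleton 0)
  refine funext_set (fun _ => Set.range ((↑) : ℝ → ℂ) \ {0}) (fun _ => hreal) fun x hx => ?_
  obtain ⟨⟨a, ha⟩, ha0⟩ := hx 0 trivial
  obtain ⟨⟨b, hb⟩, -⟩ := hx 1 trivial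
  have hz : (a : ℂ) + Complex.I * b ≠ 0 := fun h0 =>
    ha0 (by simpa [← ha] using congrArg Complex.re h0)
  simp only [φ, eval_bind₁_vec₂]
  simpa [← ha, ← hb, sub_eq_add_neg] using h (Units.mk0 _ hz)

theorem eval_mul_eq_of_eval_conj {Q : MvPolynomial (Fin 2) ℂ} {c₀ c₁ k : ℂ}
    (h : ∀ z : ℂˣ, eval ![c₀ * z, c₁ * conj (z : ℂ)] Q = k * eval ![(z : ℂ), conj (z : ℂ)] Q)
    (x y : ℂ) : eval ![c₀ * x, c₁ * y] Q = k * eval ![x, y] Q := by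
  have hpoly : bind₁ ![C c₀ * X 0, C c₁ * X 1] Q = C k * Q :=
    eq_of_eval_conj_eq fun z => by simpa [eval_bind₁_vec₂] using h z
  simpa [eval_bind₁_vec₂] using congrArg (eval ![x, y]) hpoly

theorem eval_mul_of_eval_conj_mul {Q : MvPolynomial (Fin 2) ℂ}
    (h : ∀ z w : ℂˣ, eval ![(z * w : ℂ), conj (z * w : ℂ)] Q =
      eval ![(z : ℂ), conj (z : ℂ)] Q * eval ![(w : ℂ), conj (w : ℂ)] Q)
    (x y a b : ℂ) : eval ![x * a, y * b] Q = eval ![x, y] Q * eval ![a, b] Q := by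
  have hleft (w : ℂˣ) (x y : ℂ) :
      eval ![w * x, conj (w : ℂ) * y] Q = eval ![(w : ℂ), conj (w : ℂ)] Q * eval ![x, y] Q :=
    eval_mul_eq_of_eval_conj (fun z => by simpa using h w z) x y
  exact eval_mul_eq_of_eval_conj
    (fun w => by rw [mul_comm x, mul_comm y, hleft, mul_comm]) a b

end MvPolynomial

section Eigenvector

variable {M K V : Type*} [CommRing K] [IsDomain K] [AddCommGroup V] [Module K V]
  [Module.IsTorsionFree K V] {v : V} {μ : M → K}

theorem eigenvalue_one [Monoid M] {ρ : M →* Module.End K V} (hv : v ≠ 0)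
    (h : ∀ g, ρ g v = μ g • v) : μ 1 = 1 :=
  smul_left_injective K hv (by simpa using (h 1).symm)

theorem eigenvalue_mul [Monoid M] {ρ : M →* Module.End K V} (hv : v ≠ 0)
    (h : ∀ g, ρ g v = μ g • v) (g g' : M) : μ (g * g') = μ g * μ g' :=
  smul_left_injective K hv <| by
    dsimp only
    rw [← h, map_mul, Module.End.mul_apply, h, map_smul, h, smul_smul, mul_comm]

theorem eigenvalue_ne_zero [Group M] {ρ : M →* Module.End K V} (hv : v ≠ 0)
    (h : ∀ g, ρ g v = μ g • v) (g : M) : μ g ≠ 0 :=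
  left_ne_zero_of_mul_eq_one (by rw [← eigenvalue_mul hv h, mul_inv_cancel, eigenvalue_one hv h])

end Eigenvector

theorem eq_zpow_mul_zpow_of_mul_pow_eq {K : Type*} [Field K] {μ x y : K} (hx : x ≠ 0)
    (hy : y ≠ 0) {N j k : ℕ} (h : μ * (x * y) ^ N = x ^ j * y ^ k) :
    μ = x ^ ((j : ℤ) - N) * y ^ ((k : ℤ) - N) := by
  rw [zpow_sub₀ hx, zpow_sub₀ hy]
  simp only [zpow_natCast]
  field_simp
  linear_combination h

theorem IsAlgebraicRep.exists_eval_eq_eigenvalue_mul {V : Type*} [AddCommGroup V] [Module ℂ V]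
    {h : ℂˣ →* (V →ₗ[ℂ] V)ˣ} (halg : IsAlgebraicRep h) {v : V} (hv : v ≠ 0) {lam : ℂˣ → ℂ}
    (heig : ∀ z : ℂˣ, (h z : V →ₗ[ℂ] V) v = lam z • v) :
    ∃ (N : ℕ) (Q : MvPolynomial (Fin 2) ℂ),
      ∀ z : ℂˣ, lam z * ((z : ℂ) * conj (z : ℂ)) ^ N = eval ![(z : ℂ), conj (z : ℂ)] Q := by
  obtain ⟨n, b, N, P, hP⟩ := halg
  obtain ⟨i, hi⟩ : ∃ i, b.repr v i ≠ 0 := by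
    by_contra! H
    exact hv (b.repr.map_eq_zero_iff.1 (Finsupp.ext H))
  -- the `i`-th coordinate of `h z v = lam z • v`, divided by that of `v`
  refine ⟨N, C (b.repr v i)⁻¹ * ∑ j, C (b.repr v j) * P i j, fun z => ?_⟩
  have hw : (z : ℂ) * conj (z : ℂ) ≠ 0 := mul_ne_zero z.ne_zero ((map_ne_zero _).2 z.ne_zero)
  have hrow := congrFun (LinearMap.toMatrix_mulVec_repr b b (h z : V →ₗ[ℂ] V) v) i
  simp only [heig, map_smul, Matrix.mulVec, dotProduct, hP, Finsupp.smul_apply, smul_eq_mul,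
    zpow_neg, zpow_natCast] at hrow
  have hsum : ∑ j, b.repr v j * eval ![(z : ℂ), conj (z : ℂ)] (P i j) =
      lam z * b.repr v i * ((z : ℂ) * conj (z : ℂ)) ^ N := by
    rw [← hrow, Finset.sum_mul]
    refine Finset.sum_congr rfl fun j _ => ?_
    field_simp
  simp only [map_mul, eval_C, map_sum, hsum]
  field_simp

theorem characters_of_algebraic_rep_are_monomial_general
    (V : Type*) [AddCommGroup V] [Module ℂ V]
    (h : ℂˣ →* (V →ₗ[ℂ] V)ˣ)
    (halg : IsAlgebraicRep h)
    (v : V) (hv : v ≠ 0)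
    (lam : ℂˣ → ℂ)
    (heig : ∀ z : ℂˣ, (h z : V →ₗ[ℂ] V) v = lam z • v) :
    (∀ z : ℂˣ, lam z ≠ 0) ∧
    (lam 1 = 1) ∧
    (∀ z w : ℂˣ, lam (z * w) = lam z * lam w) ∧
    (∃ p q : ℤ, ∀ z : ℂˣ, lam z = (z : ℂ) ^ p * ((starRingEnd ℂ) (z : ℂ)) ^ q) := by
  have heig' : ∀ z, (Units.coeHom _).comp h z v = lam z • v := heig
  have hone := eigenvalue_one hv heig'
  have hmul := eigenvalue_mul hv heig'
  obtain ⟨N, Q, hQ⟩ := halg.exists_eval_eq_eigenvalue_mul hv heig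
  have hQone : eval ![1, 1] Q = 1 := by simpa [hone] using (hQ 1).symm
  have hQmul (z w : ℂˣ) : eval ![(z * w : ℂ), conj (z * w : ℂ)] Q =
      eval ![(z : ℂ), conj (z : ℂ)] Q * eval ![(w : ℂ), conj (w : ℂ)] Q := by
    rw [← hQ, ← hQ, ← Units.val_mul, ← hQ, hmul, Units.val_mul, map_mul]
    ring
  obtain ⟨j, k, hjk⟩ := eval_eq_pow_mul_pow_of_eval_mul hQone (eval_mul_of_eval_conj_mul hQmul)
  refine ⟨eigenvalue_ne_zero hv heig', hone, hmul, j - N, k - N, fun z => ?_⟩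
  exact eq_zpow_mul_zpow_of_mul_pow_eq z.ne_zero ((map_ne_zero _).2 z.ne_zero)
    ((hQ z).trans (hjk _ _))

theorem characters_of_algebraic_rep_are_monomial
    (V : Type*) [AddCommGroup V] [Module ℂ V] [FiniteDimensional ℂ V]
    (h : ℂˣ →* (V →ₗ[ℂ] V)ˣ)
    (halg : IsAlgebraicRep h)
    (v : V) (hv : v ≠ 0)
    (lam : ℂˣ → ℂ)
    (heig : ∀ z : ℂˣ, (h z : V →ₗ[ℂ] V) v = lam z • v) :
    (∀ z : ℂˣ, lam z ≠ 0) ∧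
    (lam 1 = 1) ∧
    (∀ z w : ℂˣ, lam (z * w) = lam z * lam w) ∧
    (∃ p q : ℤ, ∀ z : ℂˣ, lam z = (z : ℂ) ^ p * ((starRingEnd ℂ) (z : ℂ)) ^ q) :=
  characters_of_algebraic_rep_are_monomial_general V h halg v hv lam heig
end
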